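/- Let G be a strongly connected digraph with a fixed start vertex s, and let e=(u,v) be a bridge of the flow graph G_s that is canceled by the insertion of an edge (x,y) (i.e., e is not a bridge of (G+(x,y))_s). Then (i) v dominates y in G_s, and (ii) y and v are strongly connected in the induced subgraph G[D(v)], i.e., y lies in the same e-dominated component as v. -/

import Mathlib

/-!  Basic notions for finite directed graphs given by an edge set `E : Set (V × V)`. -/

variable {V : Type*}

/-- A path from `u` to `v`: a nonempty list of vertices starting at `u`, ending at `v`,
in which every pair of consecutive vertices is an edge. -/
def IsPath (E : Set (V × V)) (u v : V) (p : List V) : Prop :=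
  p.Chain' (fun a b => (a, b) ∈ E) ∧ p.head? = some u ∧ p.getLast? = some v

/-- `v` is reachable from `u` by a path. -/
def Reach (E : Set (V × V)) (u v : V) : Prop := ∃ p, IsPath E u v p

/-- Every vertex reaches every other vertex. -/
def StronglyConnected (E : Set (V × V)) : Prop := ∀ u v, Reach E u v

/-- An edge `e` is a strong bridge if its removal destroys strong connectivity. -/
def StrongBridge (E : Set (V × V)) (e : V × V) : Prop :=
  e ∈ E ∧ ¬ StronglyConnected (E \ {e})

/-- `u` dominates `v` in the flow graph with start vertex `s`:
every path from `s` to `v` contains `u`. -/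
def Dominates (E : Set (V × V)) (s u v : V) : Prop :=
  ∀ p, IsPath E s v p → u ∈ p

/-- An edge `e = (e.1, e.2)` is a bridge of the flow graph `G_s`:
every path from `s` to `e.2` contains the edge `e`. -/
def FlowBridge (E : Set (V × V)) (s : V) (e : V × V) : Prop :=
  e ∈ E ∧ ∀ p, IsPath E s e.2 p → [e.1, e.2] <:+: p

/-- The reverse digraph: all edges reversed. -/
def rev (E : Set (V × V)) : Set (V × V) := {e | (e.2, e.1) ∈ E}

/-- `D(v)`: the set of vertices dominated by `v` in `G_s`. -/
def Dset (E : Set (V × V)) (s v : V) : Set V := {w | Dominates E s v w}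

/-- Reachability inside the induced subgraph `G[S]`: a path all of whose vertices lie in `S`. -/
def ReachableIn (E : Set (V × V)) (S : Set V) (u v : V) : Prop :=
  ∃ p, IsPath E u v p ∧ ∀ w ∈ p, w ∈ S

/-- `C` is a strongly connected component of the induced subgraph `G[S]`. -/
def SCCIn (E : Set (V × V)) (S : Set V) (C : Set V) : Prop :=
  C.Nonempty ∧ C ⊆ S ∧
  (∀ u ∈ C, ∀ v ∈ C, ReachableIn E S u v) ∧
  (∀ v ∈ S, ∀ u ∈ C, ReachableIn E S u v → ReachableIn E S v u → v ∈ C)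

/-- A bridge-dominated component: an SCC of `G[D(v)]` for some bridge `(u,v)` of `G_s`. -/
def BridgeDomComponent (E : Set (V × V)) (s : V) (C : Set V) : Prop :=
  ∃ u v, FlowBridge E s (u, v) ∧ SCCIn E (Dset E s v) C

/-- The set of edges used by a path `p`. -/
def pathEdges (p : List V) : Set (V × V) := {e | [e.1, e.2] <:+: p}

/-- `u` and `v` are `2`-edge-connected: there are two edge-disjoint paths from `u` to `v`
and two edge-disjoint paths from `v` to `u`. -/
def TwoEdgeConnected (E : Set (V × V)) (u v : V) : Prop :=
  (∃ p q, IsPath E u v p ∧ IsPath E u v q ∧ pathEdges p ∩ pathEdges q = ∅) ∧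
  (∃ p q, IsPath E v u p ∧ IsPath E v u q ∧ pathEdges p ∩ pathEdges q = ∅)

/-- `u` is the immediate dominator of `v` in `G_s`: a proper dominator of `v`
dominated by every proper dominator of `v`. -/
def ImmDom (E : Set (V × V)) (s u v : V) : Prop :=
  Dominates E s u v ∧ u ≠ v ∧
  ∀ w, Dominates E s w v → w ≠ v → Dominates E s w u

/-- `depth v = |Dom(v)|`, the number of dominators of `v` in `G_s`. -/
noncomputable def depth (E : Set (V × V)) (s v : V) : ℕ :=
  {u | Dominates E s u v}.ncard

/-- `z` is the nearest common ancestor of `x` and `y` in the dominator tree of `G_s`: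
a common dominator of `x` and `y` dominated by every common dominator. -/
def IsNCA (E : Set (V × V)) (s x y z : V) : Prop :=
  Dominates E s z x ∧ Dominates E s z y ∧
  ∀ w, Dominates E s w x → Dominates E s w y → Dominates E s w z

/-- `r` is the bridge-decomposition root of `v` in `G_s`: the deepest dominator `r`
of `v` such that `r = s` or `(d(r), r)` is a bridge of `G_s`. -/
def IsBDRoot (E : Set (V × V)) (s v r : V) : Prop :=
  Dominates E s r v ∧
  (r = s ∨ ∃ u, ImmDom E s u r ∧ FlowBridge E s (u, r)) ∧
  ∀ r', Dominates E s r' v →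
    (r' = s ∨ ∃ u', ImmDom E s u' r' ∧ FlowBridge E s (u', r')) →
    Dominates E s r' r


/-!
A path from `s` to `v` in `G + (x, y)` that avoids `(u, v)` must use `(x, y)`, and its part after
the last visit of `y` is a path from `y` to `v` in `G - (u, v)`. Every vertex `w` reaching `v` in
`G - (u, v)` is dominated by `v`: a path from `s` to `w` avoiding `v` uses no edge into `v`, so it
would extend to a path from `s` to `v` avoiding the bridge. Conversely, any path from `s` to `y`
passes through `v`, and its part after the last visit of `v` stays inside `D(v)`.
-/

theorem List.exists_cons_suffix_notMem {α : Type*} {l : List α} {a : α} (h : a ∈ l) :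
    ∃ t, a :: t <:+ l ∧ a ∉ t := by
  induction l with
  | nil => cases h
  | cons c l ih =>
    by_cases ha : a ∈ l
    · obtain ⟨t, ht, hat⟩ := ih ha
      exact ⟨t, ht.trans (List.suffix_cons c l), hat⟩
    · obtain rfl : a = c := (List.mem_cons.mp h).resolve_right ha
      exact ⟨l, List.suffix_refl _, ha⟩

section Paths

variable {E E' : Set (V × V)} {a b w : V} {p q r : List V}

theorem IsPath.restrict (hp : IsPath E a b p)
    (h : ∀ c d, [c, d] <:+: p → (c, d) ∈ E → (c, d) ∈ E') : IsPath E' a b p :=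
  ⟨List.isChain_iff_forall_rel_of_append_cons_cons.mpr fun c d l₁ l₂ hp' =>
    h c d ⟨l₁, l₂, by simp [hp']⟩ (List.isChain_iff_forall_rel_of_append_cons_cons.mp hp.1 hp'),
    hp.2⟩

theorem IsPath.mono (hp : IsPath E a b p) (h : E ⊆ E') : IsPath E' a b p :=
  hp.restrict fun _ _ _ hcd => h hcd

theorem IsPath.restrict_of_notMem_tail (hp : IsPath E a b p) (hw : w ∉ p.tail)
    (h : ∀ e ∈ E, e.2 ≠ w → e ∈ E') : IsPath E' a b p :=
  ⟨(List.IsChain.iff_mem_mem_tail.mp hp.1).imp fun _ _ hcd =>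
    h _ hcd.2.2 fun hd => hw (hd ▸ hcd.2.1), hp.2⟩

theorem IsPath.of_insert_of_notMem_tail {x y : V} (hp : IsPath (insert (x, y) E) a b p)
    (hy : y ∉ p.tail) : IsPath E a b p :=
  hp.restrict_of_notMem_tail hy fun _ he hey =>
    (Set.mem_insert_iff.mp he).resolve_left fun h => hey (h ▸ rfl)

theorem IsPath.suffix (hp : IsPath E a b p) (h : w :: r <:+ p) : IsPath E w b (w :: r) := by
  obtain ⟨pre, rfl⟩ := h
  refine ⟨hp.1.right_of_append, rfl, ?_⟩
  simpa [List.getLast?_cons] using hp.2.2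

theorem IsPath.append (hq : IsPath E a w q) (hr : IsPath E w b r) :
    IsPath E a b (q ++ r.tail) := by
  obtain ⟨hcr, hhr, hlr⟩ := hr
  obtain ⟨hcq, hhq, hlq⟩ := hq
  obtain ⟨r, rfl⟩ : ∃ r', r = w :: r' := by
    cases r with
    | nil => simp at hhr
    | cons c r' => exact ⟨r', by simpa using hhr⟩
  obtain ⟨hjoin, hcr'⟩ := List.isChain_cons.mp hcr
  refine ⟨hcq.append hcr' ?_, by simp [hhq], ?_⟩
  · intro c hc d hd
    rw [hlq, Option.mem_some_iff] at hc
    exact hc ▸ hjoin d hd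
  · rw [List.getLast?_cons, Option.some.injEq] at hlr
    cases h : r.getLast? <;> simp_all

theorem IsPath.reach_of_mem (hp : IsPath E a b p) (hw : w ∈ p) : Reach E w b := by
  obtain ⟨pre, t, rfl⟩ := List.append_of_mem hw
  exact ⟨w :: t, hp.suffix ⟨pre, rfl⟩⟩

end Paths

section Domination

variable {E : Set (V × V)} {s a b w : V} {e : V × V}

theorem dominates_self : Dominates E s a a :=
  fun _ hp => List.mem_of_mem_getLast? hp.2.2

theorem Dominates.of_isPath_notMem {r : List V} (hab : Dominates E s a b)
    (hr : IsPath E w b r) (har : a ∉ r) : Dominates E s a w := by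
  intro q hq
  rcases List.mem_append.mp (hab _ (hq.append hr)) with h | h
  · exact h
  · exact absurd (List.mem_of_mem_tail h) har

theorem FlowBridge.not_reach_sdiff (he : FlowBridge E s e) : ¬ Reach (E \ {e}) s e.2 := by
  rintro ⟨p, hp⟩
  have hpair := (hp.1.infix (he.2 p (hp.mono Set.sdiff_subset))).rel
  simp at hpair

theorem Dominates.of_reach_sdiff (hs : ¬ Reach (E \ {e}) s e.2) (hw : Reach (E \ {e}) w e.2) :
    Dominates E s e.2 w := by
  obtain ⟨r, hr⟩ := hw
  intro q hq
  by_contra hvq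
  have hq' : IsPath (E \ {e}) s w q :=
    hq.restrict_of_notMem_tail (fun h => hvq (List.mem_of_mem_tail h))
      fun f hf hfe => ⟨hf, fun h => hfe (h ▸ rfl)⟩
  exact hs ⟨_, hq'.append hr⟩

theorem reachableIn_dset_of_reach_sdiff (hs : ¬ Reach (E \ {e}) s e.2)
    (hw : Reach (E \ {e}) w e.2) : ReachableIn E (Dset E s e.2) w e.2 := by
  obtain ⟨r, hr⟩ := hw
  exact ⟨r, hr.mono Set.sdiff_subset, fun c hc => Dominates.of_reach_sdiff hs (hr.reach_of_mem hc)⟩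

theorem Dominates.reachableIn_dset (hab : Dominates E s a b) (hb : Reach E s b) :
    ReachableIn E (Dset E s a) a b := by
  obtain ⟨q, hq⟩ := hb
  obtain ⟨t, hsuf, hat⟩ := List.exists_cons_suffix_notMem (hab q hq)
  refine ⟨a :: t, hq.suffix hsuf, fun w hw => ?_⟩
  rcases List.mem_cons.mp hw with rfl | hwt
  · exact dominates_self
  · obtain ⟨pre, t₂, rfl⟩ := List.append_of_mem hwt
    have hsuf₂ : w :: t₂ <:+ a :: (pre ++ w :: t₂) := ⟨a :: pre, rfl⟩
    exact hab.of_isPath_notMem (hq.suffix (hsuf₂.trans hsuf))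
      fun h => hat (List.mem_append_right pre h)

end Domination

/-- if a bridge `(u,v)` of `G_s` is canceled by the insertion of `(x,y)`
then `v` dominates `y` in `G_s` and `y` is in the same `e`-dominated component as `v`,
i.e. `y` and `v` are strongly connected in `G[D(v)]`. -/
theorem stmt7 {V : Type*} (E : Set (V × V)) (s u v x y : V)
    (hSC : StronglyConnected E)
    (hbr : FlowBridge E s (u, v))
    (hcanc : ¬ FlowBridge (insert (x, y) E) s (u, v)) :
    Dominates E s v y ∧
    ReachableIn E (Dset E s v) y v ∧ ReachableIn E (Dset E s v) v y := by
  obtain ⟨p, hp, hpuv⟩ : ∃ p, IsPath (insert (x, y) E) s v p ∧ ¬ [u, v] <:+: p := by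
    simpa [FlowBridge, Set.mem_insert_of_mem _ hbr.1] using hcanc
  have hyp : y ∈ p := by
    by_contra hyp
    exact hpuv (hbr.2 p (hp.of_insert_of_notMem_tail fun h => hyp (List.mem_of_mem_tail h)))
  obtain ⟨t, hsuf, hyt⟩ := List.exists_cons_suffix_notMem hyp
  have hr : IsPath (E \ {(u, v)}) y v (y :: t) := by
    refine ((hp.suffix hsuf).of_insert_of_notMem_tail hyt).restrict fun c d hcd hE => ⟨hE, ?_⟩
    simp only [Set.mem_singleton_iff, Prod.mk.injEq]
    rintro ⟨rfl, rfl⟩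
    exact hpuv (hcd.trans hsuf.isInfix)
  have hnot := hbr.not_reach_sdiff
  have hvy : Dominates E s v y := Dominates.of_reach_sdiff hnot ⟨_, hr⟩
  exact ⟨hvy, reachableIn_dset_of_reach_sdiff hnot ⟨_, hr⟩, hvy.reachableIn_dset (hSC s y)⟩
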